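/- Let A be the adjacency matrix of a graph G on N nodes with Laplacian Q = Δ − A, whose eigenvalues are ordered 0 = μ_N ≤ μ_{N−1} ≤ … ≤ μ_1. Let S_k and S_m be two disjoint subsets of the node set of sizes N_k and N_m respectively, with indicator vectors s_k and s_m, and let ã_{km} = (s_kᵀ A s_m)/(N_k·N_m) denote the link density between S_k and S_m. Let θ ≥ 0 satisfy |N·ã_{km} − μ_i| ≤ θ for all 1 ≤ i ≤ N−1. Then for every Bernoulli vector w ∈ {0,1}^N, writing w̃_k = s_kᵀw and w̃_m = s_mᵀw, the number of links between the nodes of S_k outside the support of w and the nodes of S_m inside the support of w satisfies: |((u−w)∘s_k)ᵀ A (w∘s_m) − ã_{km}(N_k − w̃_k)·w̃_m| ≤ (θ/N)·√(w̃_m(N − w̃_m)(N_k − w̃_k)(N − N_k + w̃_k)), where ∘ denotes the elementwise (Hadamard) product and u the all-ones vector. -/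

import Mathlib

/-!
Write `x = (u - w) ∘ s_k` and `y = w ∘ s_m`; these are Bernoulli vectors with disjoint supports,
so the degree part of `Q = Δ - A` does not see them and `xᵀ A y = -xᵀ Q y`. Projecting `x, y`
orthogonally to `u` (which lies in the kernel of `Q`) leaves `xᵀ Q y` unchanged and turns their
inner product into `-X Y / N`, so the error equals `∑ᵢ (N ã - μᵢ) (zᵢᵀ x') (zᵢᵀ y')` in the
eigenbasis `zᵢ` of `Q`. Each factor `N ã - μᵢ` is at most `θ` in absolute value, except possibly for
`μ_N = 0`; if that eigenvalue is simple, `z_N` is parallel to `u` and `z_Nᵀ x' = 0`. Cauchy–Schwarz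
and `‖x'‖² = X (N - X) / N` finish the proof.
-/

open Matrix

section Orthonormal

variable {n : Type*} [Fintype n] [DecidableEq n] {z : n → n → ℝ}

theorem sum_dotProduct_smul_of_orthonormal
    (hz : ∀ i j, z i ⬝ᵥ z j = if i = j then (1 : ℝ) else 0) (v : n → ℝ) :
    ∑ i, (z i ⬝ᵥ v) • z i = v := by
  have hZZt : of z * (of z)ᵀ = 1 := by
    ext i j
    simpa [mul_apply, one_apply, dotProduct] using hz i j
  calc ∑ i, (z i ⬝ᵥ v) • z i = (of z *ᵥ v) ᵥ* of z := (vecMul_eq_sum _ _).symm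
    _ = ((of z)ᵀ * of z) *ᵥ v := by rw [← mulVec_mulVec, mulVec_transpose]
    _ = v := by rw [mul_eq_one_comm.mp hZZt, one_mulVec]

theorem sum_dotProduct_mul_dotProduct_of_orthonormal
    (hz : ∀ i j, z i ⬝ᵥ z j = if i = j then (1 : ℝ) else 0) (v w : n → ℝ) :
    ∑ i, (z i ⬝ᵥ v) * (z i ⬝ᵥ w) = v ⬝ᵥ w := by
  calc ∑ i, (z i ⬝ᵥ v) * (z i ⬝ᵥ w) = ∑ i, (z i ⬝ᵥ w) * (v ⬝ᵥ z i) :=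
        Finset.sum_congr rfl fun i _ => by rw [dotProduct_comm v]; ring
    _ = v ⬝ᵥ ∑ i, (z i ⬝ᵥ w) • z i := by
        simp only [dotProduct_sum, dotProduct_smul, smul_eq_mul]
    _ = v ⬝ᵥ w := by rw [sum_dotProduct_smul_of_orthonormal hz]

variable {Q : Matrix n n ℝ} {μ : n → ℝ}

theorem dotProduct_mulVec_eq_sum_eigenvalues
    (hz : ∀ i j, z i ⬝ᵥ z j = if i = j then (1 : ℝ) else 0)
    (hQ : ∀ i, Q *ᵥ z i = μ i • z i) (v w : n → ℝ) :
    v ⬝ᵥ Q *ᵥ w = ∑ i, μ i * ((z i ⬝ᵥ v) * (z i ⬝ᵥ w)) := by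
  calc v ⬝ᵥ Q *ᵥ w = v ⬝ᵥ Q *ᵥ ∑ i, (z i ⬝ᵥ w) • z i := by
        rw [sum_dotProduct_smul_of_orthonormal hz]
    _ = ∑ i, (z i ⬝ᵥ w) * (μ i * (v ⬝ᵥ z i)) := by
        simp only [mulVec_sum, mulVec_smul, hQ, dotProduct_sum, dotProduct_smul, smul_eq_mul]
    _ = ∑ i, μ i * ((z i ⬝ᵥ v) * (z i ⬝ᵥ w)) :=
        Finset.sum_congr rfl fun i _ => by rw [dotProduct_comm v]; ring

theorem eigenvalue_mul_dotProduct_eq_zero_of_mulVec_eq_zero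
    (hz : ∀ i j, z i ⬝ᵥ z j = if i = j then (1 : ℝ) else 0)
    (hQ : ∀ i, Q *ᵥ z i = μ i • z i) {v : n → ℝ} (hv : Q *ᵥ v = 0) (i : n) :
    μ i * (z i ⬝ᵥ v) = 0 := by
  have h := dotProduct_mulVec_eq_sum_eigenvalues hz hQ (z i) v
  simp only [hv, dotProduct_zero, hz, ite_mul, one_mul, zero_mul, mul_ite, mul_zero,
    Finset.sum_ite_eq', Finset.mem_univ, if_true] at h
  exact h.symm

theorem dotProduct_mulVec_eq_zero_of_mulVec_eq_zero
    (hz : ∀ i j, z i ⬝ᵥ z j = if i = j then (1 : ℝ) else 0)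
    (hQ : ∀ i, Q *ᵥ z i = μ i • z i) {v : n → ℝ} (hv : Q *ᵥ v = 0) (w : n → ℝ) :
    v ⬝ᵥ Q *ᵥ w = 0 := by
  rw [dotProduct_mulVec_eq_sum_eigenvalues hz hQ]
  refine Finset.sum_eq_zero fun i _ => ?_
  rw [← mul_assoc, eigenvalue_mul_dotProduct_eq_zero_of_mulVec_eq_zero hz hQ hv, zero_mul]

/-- If `0` is a simple eigenvalue, `z i` spans the kernel of `Q`, so it is parallel to `v`. -/
theorem dotProduct_eq_zero_of_simple_kernel
    (hz : ∀ i j, z i ⬝ᵥ z j = if i = j then (1 : ℝ) else 0)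
    (hQ : ∀ i, Q *ᵥ z i = μ i • z i) {v : n → ℝ} (hv : Q *ᵥ v = 0) (hv0 : v ≠ 0)
    {i : n} (hμ : ∀ j ≠ i, μ j ≠ 0) {x : n → ℝ} (hx : v ⬝ᵥ x = 0) :
    z i ⬝ᵥ x = 0 := by
  have hzj : ∀ j ≠ i, z j ⬝ᵥ v = 0 := fun j hj =>
    (mul_eq_zero.mp (eigenvalue_mul_dotProduct_eq_zero_of_mulVec_eq_zero hz hQ hv j)).resolve_left
      (hμ j hj)
  have hv_eq : (z i ⬝ᵥ v) • z i = v :=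
    (Finset.sum_eq_single i (fun j _ hj => by rw [hzj j hj, zero_smul]) (by simp)).symm.trans
      (sum_dotProduct_smul_of_orthonormal hz v)
  have hzv : z i ⬝ᵥ v ≠ 0 := fun h => hv0 (by rw [← hv_eq, h, zero_smul])
  rw [← hv_eq, smul_dotProduct, smul_eq_mul] at hx
  exact (mul_eq_zero.mp hx).resolve_left hzv

theorem abs_mul_dotProduct_sub_dotProduct_mulVec_le
    (hz : ∀ i j, z i ⬝ᵥ z j = if i = j then (1 : ℝ) else 0)
    (hQ : ∀ i, Q *ᵥ z i = μ i • z i) {c θ : ℝ} (hθ0 : 0 ≤ θ) {x : n → ℝ}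
    (hθ : ∀ i, z i ⬝ᵥ x ≠ 0 → |c - μ i| ≤ θ) (y : n → ℝ) :
    |c * (x ⬝ᵥ y) - x ⬝ᵥ Q *ᵥ y| ≤ θ * (√(x ⬝ᵥ x) * √(y ⬝ᵥ y)) := by
  have hterm : ∀ i,
      |(c - μ i) * ((z i ⬝ᵥ x) * (z i ⬝ᵥ y))| ≤ θ * (|z i ⬝ᵥ x| * |z i ⬝ᵥ y|) := by
    intro i
    by_cases hi : z i ⬝ᵥ x = 0
    · simp [hi]
    · rw [abs_mul, abs_mul]
      exact mul_le_mul_of_nonneg_right (hθ i hi) (by positivity)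
  have hsq : ∀ v : n → ℝ, ∑ i, |z i ⬝ᵥ v| ^ 2 = v ⬝ᵥ v := fun v => by
    simp only [sq_abs]
    simp only [sq, sum_dotProduct_mul_dotProduct_of_orthonormal hz]
  calc |c * (x ⬝ᵥ y) - x ⬝ᵥ Q *ᵥ y|
      = |∑ i, (c - μ i) * ((z i ⬝ᵥ x) * (z i ⬝ᵥ y))| := by
        simp only [sub_mul, Finset.sum_sub_distrib, ← Finset.mul_sum,
          sum_dotProduct_mul_dotProduct_of_orthonormal hz,
          dotProduct_mulVec_eq_sum_eigenvalues hz hQ]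
    _ ≤ ∑ i, θ * (|z i ⬝ᵥ x| * |z i ⬝ᵥ y|) :=
        (Finset.abs_sum_le_sum_abs _ _).trans (Finset.sum_le_sum fun i _ => hterm i)
    _ = θ * ∑ i, |z i ⬝ᵥ x| * |z i ⬝ᵥ y| := Finset.mul_sum _ _ _ |>.symm
    _ ≤ θ * (√(x ⬝ᵥ x) * √(y ⬝ᵥ y)) := by
        gcongr
        simpa only [hsq] using Real.sum_mul_le_sqrt_mul_sqrt Finset.univ
          (fun i => |z i ⬝ᵥ x|) (fun i => |z i ⬝ᵥ y|)

theorem abs_sub_eigenvalue_le_of_dotProduct_ne_zero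
    (hz : ∀ i j, z i ⬝ᵥ z j = if i = j then (1 : ℝ) else 0)
    (hQ : ∀ i, Q *ᵥ z i = μ i • z i) {v : n → ℝ} (hv : Q *ᵥ v = 0) (hv0 : v ≠ 0)
    {i : n} (hμi : μ i = 0) {c θ : ℝ} (hθ : ∀ j ≠ i, |c - μ j| ≤ θ) {x : n → ℝ}
    (hx : v ⬝ᵥ x = 0) (j : n) (hj : z j ⬝ᵥ x ≠ 0) :
    |c - μ j| ≤ θ := by
  rcases eq_or_ne j i with rfl | hji
  · by_contra hc
    exact hj <| dotProduct_eq_zero_of_simple_kernel hz hQ hv hv0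
      (fun k hk hμk => hc (by simpa [hμi, hμk] using hθ k hk)) hx
  · exact hθ j hji

end Orthonormal

section Centering

variable {n : Type*} [Fintype n]

noncomputable def centered (v : n → ℝ) : n → ℝ := v - ((∑ i, v i) / Fintype.card n) • 1

theorem one_dotProduct_centered (v : n → ℝ) : 1 ⬝ᵥ centered v = 0 := by
  rw [centered, dotProduct_sub, dotProduct_smul, one_dotProduct_one, one_dotProduct,
    smul_eq_mul]
  rcases isEmpty_or_nonempty n with hn | hn
  · simp
  · field_simp
    ring

theorem centered_dotProduct_centered (x y : n → ℝ) :
    centered x ⬝ᵥ centered y = x ⬝ᵥ y - (∑ i, x i) * (∑ i, y i) / Fintype.card n := by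
  simp only [centered, sub_dotProduct, dotProduct_sub, smul_dotProduct, dotProduct_smul]
  rw [one_dotProduct_one]
  simp only [dotProduct_one, one_dotProduct, smul_eq_mul]
  rcases eq_or_ne (Fintype.card n : ℝ) 0 with hN | hN
  · simp [hN]
  · field_simp
    ring

theorem dotProduct_self_of_bernoulli {x : n → ℝ} (hx : ∀ i, x i = 0 ∨ x i = 1) :
    x ⬝ᵥ x = ∑ i, x i :=
  Finset.sum_congr rfl fun i _ => by rcases hx i with h | h <;> simp [h]

theorem card_mul_centered_dotProduct_self_of_bernoulli [Nonempty n] {x : n → ℝ}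
    (hx : ∀ i, x i = 0 ∨ x i = 1) :
    Fintype.card n * (centered x ⬝ᵥ centered x) =
      (∑ i, x i) * (Fintype.card n - ∑ i, x i) := by
  rw [centered_dotProduct_centered, dotProduct_self_of_bernoulli hx]
  field_simp

theorem centered_dotProduct_mulVec_centered {Q : Matrix n n ℝ} (hQ1 : Q *ᵥ 1 = 0)
    (h1Q : ∀ w, 1 ⬝ᵥ Q *ᵥ w = 0) (x y : n → ℝ) :
    centered x ⬝ᵥ Q *ᵥ centered y = x ⬝ᵥ Q *ᵥ y := by
  simp only [centered, mulVec_sub, mulVec_smul, hQ1, smul_zero, sub_zero, sub_dotProduct,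
    smul_dotProduct, h1Q, smul_eq_mul, mul_zero]

end Centering

section Laplacian

variable {n : Type*} [Fintype n] [DecidableEq n] (A : Matrix n n ℝ)

theorem laplacian_mulVec_one : (diagonal (fun k => ∑ j, A k j) - A) *ᵥ 1 = 0 := by
  ext k
  rw [sub_mulVec, Pi.sub_apply, mulVec_diagonal, Pi.one_apply, mul_one, Pi.zero_apply]
  exact sub_eq_zero.mpr (dotProduct_one _).symm

theorem dotProduct_diagonal_sub_mulVec_of_mul_eq_zero (d : n → ℝ) {x y : n → ℝ}
    (hxy : ∀ i, x i * y i = 0) :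
    x ⬝ᵥ (diagonal d - A) *ᵥ y = -(x ⬝ᵥ A *ᵥ y) := by
  have hdiag : x ⬝ᵥ diagonal d *ᵥ y = 0 :=
    Finset.sum_eq_zero fun i _ => by
      rw [mulVec_diagonal, mul_left_comm, hxy i, mul_zero]
  rw [sub_mulVec, dotProduct_sub, hdiag, zero_sub]

end Laplacian

theorem abs_dotProduct_mulVec_sub_le_of_bernoulli {n : Type*} [Fintype n] [DecidableEq n]
    [Nonempty n] {A : Matrix n n ℝ} {μ : n → ℝ} {z : n → n → ℝ}
    (hz : ∀ i j, z i ⬝ᵥ z j = if i = j then (1 : ℝ) else 0)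
    (hQ : ∀ i, (diagonal (fun k => ∑ j, A k j) - A) *ᵥ z i = μ i • z i)
    {x y : n → ℝ} (hx : ∀ i, x i = 0 ∨ x i = 1) (hy : ∀ i, y i = 0 ∨ y i = 1)
    (hxy : ∀ i, x i * y i = 0) {a θ : ℝ} (hθ0 : 0 ≤ θ)
    (hθ : ∀ i, z i ⬝ᵥ centered x ≠ 0 → |Fintype.card n * a - μ i| ≤ θ) :
    |x ⬝ᵥ A *ᵥ y - a * ((∑ i, x i) * (∑ i, y i))| ≤
      θ / Fintype.card n * √((∑ i, y i) * (Fintype.card n - ∑ i, y i) *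
        ((∑ i, x i) * (Fintype.card n - ∑ i, x i))) := by
  set N : ℝ := (Fintype.card n : ℝ)
  set Q := diagonal (fun k => ∑ j, A k j) - A
  have hN : 0 < N := Nat.cast_pos.mpr Fintype.card_pos
  have hQ1 : Q *ᵥ 1 = 0 := laplacian_mulVec_one A
  have hcut : x ⬝ᵥ A *ᵥ y - a * ((∑ i, x i) * (∑ i, y i)) =
      N * a * (centered x ⬝ᵥ centered y) - centered x ⬝ᵥ Q *ᵥ centered y := by
    have hx_y : x ⬝ᵥ y = 0 := Finset.sum_eq_zero fun i _ => hxy i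
    have h1Q := dotProduct_mulVec_eq_zero_of_mulVec_eq_zero hz hQ hQ1
    rw [centered_dotProduct_centered, hx_y, centered_dotProduct_mulVec_centered hQ1 h1Q,
      dotProduct_diagonal_sub_mulVec_of_mul_eq_zero A _ hxy]
    field_simp
    ring
  have hnorm : ∀ v : n → ℝ, 0 ≤ v ⬝ᵥ v := fun v =>
    Finset.sum_nonneg fun i _ => mul_self_nonneg _
  calc |x ⬝ᵥ A *ᵥ y - a * ((∑ i, x i) * (∑ i, y i))|
      ≤ θ * (√(centered x ⬝ᵥ centered x) * √(centered y ⬝ᵥ centered y)) := by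
        rw [hcut]
        exact abs_mul_dotProduct_sub_dotProduct_mulVec_le hz hQ hθ0 hθ _
    _ = θ / N * √((N * N) * ((centered x ⬝ᵥ centered x) * (centered y ⬝ᵥ centered y))) := by
        rw [Real.sqrt_mul (mul_self_nonneg N), Real.sqrt_mul_self hN.le,
          Real.sqrt_mul (hnorm _)]
        field_simp
    _ = θ / N * √((∑ i, y i) * (N - ∑ i, y i) * ((∑ i, x i) * (N - ∑ i, x i))) := by
        rw [← card_mul_centered_dotProduct_self_of_bernoulli hx,
          ← card_mul_centered_dotProduct_self_of_bernoulli hy]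
        simp only [N]
        congr 2
        ring

/-- Topological approximation for general graphs.  `A` is the adjacency matrix
of a simple graph on `N` nodes, with Laplacian eigenvalues
`μ 0 ≥ μ 1 ≥ … ≥ μ (N-1) = 0` realized by an orthonormal eigenbasis `z`.
`Sk`, `Sm` are disjoint node subsets with indicator vectors `sk`, `sm`,
`ã = (skᵀ A sm)/(N_k N_m)` is the link density, and `θ` bounds
`|N ã - μ_i|` for all eigenvalues but the last.  Then the cut-set between the
nodes of `Sk` outside the support of the Bernoulli vector `w` and the nodes of
`Sm` inside its support is approximated by `ã (N_k - w̃_k) w̃_m` with the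
stated error bound. -/
theorem topological_approx_general_graph
    (N : ℕ) (hN : 0 < N)
    (A : Matrix (Fin N) (Fin N) ℝ)
    (μ : Fin N → ℝ) (z : Fin N → (Fin N → ℝ))
    (hz_orth : ∀ i j, z i ⬝ᵥ z j = if i = j then (1 : ℝ) else 0)
    (hz_eig : ∀ i,
      (Matrix.diagonal (fun k => ∑ j, A k j) - A).mulVec (z i) = μ i • z i)
    (hμ_last : μ ⟨N - 1, by omega⟩ = 0)
    (Sk Sm : Finset (Fin N))
    (hdisj : Disjoint Sk Sm)
    (sk sm : Fin N → ℝ)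
    (hsk : sk = fun i => if i ∈ Sk then (1 : ℝ) else 0)
    (hsm : sm = fun i => if i ∈ Sm then (1 : ℝ) else 0)
    (Nk : ℝ) (hNk : Nk = Sk.card)
    (akm : ℝ)
    (θ : ℝ) (hθ0 : 0 ≤ θ)
    (hθ : ∀ i : Fin N, (i : ℕ) < N - 1 → |N * akm - μ i| ≤ θ)
    (w : Fin N → ℝ)
    (hw : ∀ i, w i = 0 ∨ w i = 1) :
    |(fun i => (1 - w i) * sk i) ⬝ᵥ A.mulVec (fun i => w i * sm i) -
        akm * ((Nk - sk ⬝ᵥ w) * (sm ⬝ᵥ w))| ≤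
      (θ / N) * Real.sqrt ((sm ⬝ᵥ w) * (N - sm ⬝ᵥ w) *
        ((Nk - sk ⬝ᵥ w) * (N - Nk + sk ⬝ᵥ w))) := by
  have : NeZero N := ⟨hN.ne'⟩
  subst hsk hsm hNk
  set x : Fin N → ℝ := fun i => (1 - w i) * if i ∈ Sk then 1 else 0
  set y : Fin N → ℝ := fun i => w i * if i ∈ Sm then 1 else 0
  have hx : ∀ i, x i = 0 ∨ x i = 1 := fun i => by
    rcases hw i with h | h <;> by_cases hi : i ∈ Sk <;> simp [x, h, hi]
  have hy : ∀ i, y i = 0 ∨ y i = 1 := fun i => by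
    rcases hw i with h | h <;> by_cases hi : i ∈ Sm <;> simp [y, h, hi]
  have hxy : ∀ i, x i * y i = 0 := fun i => by
    by_cases hi : i ∈ Sk
    · simp [x, y, hi, Finset.disjoint_left.mp hdisj hi]
    · simp [x, hi]
  have hX : ∑ i, x i = Sk.card - (fun i => if i ∈ Sk then (1 : ℝ) else 0) ⬝ᵥ w := by
    simp [x, dotProduct, Finset.sum_sub_distrib, mul_comm]
  have hY : ∑ i, y i = (fun i => if i ∈ Sm then (1 : ℝ) else 0) ⬝ᵥ w := by
    simp [y, dotProduct, mul_comm]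
  have hθ' : ∀ i, z i ⬝ᵥ centered x ≠ 0 → |Fintype.card (Fin N) * akm - μ i| ≤ θ := by
    rw [Fintype.card_fin]
    refine abs_sub_eigenvalue_le_of_dotProduct_ne_zero hz_orth hz_eig
      (laplacian_mulVec_one A) one_ne_zero hμ_last (fun j hj => hθ j ?_)
      (one_dotProduct_centered x)
    have hj' : (j : ℕ) ≠ N - 1 := fun h => hj (Fin.ext h)
    omega
  have h := abs_dotProduct_mulVec_sub_le_of_bernoulli hz_orth hz_eig hx hy hxy hθ0 hθ'
  rw [hX, hY, Fintype.card_fin] at h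
  convert h using 5
  ring
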